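/- (Theorem 2, decay.) Assume h(τ) > 0, let q > 1, define ζ(t) := [h(τ)·ν(τ) + ∫_τ^t β(ξ)·ν(ξ) dξ]/ν(t) for t ≥ τ, and assume α(t)·σ(t)^p·(q·ζ(t))^p ≤ (q−1)·β(t) for all t ≥ τ. If additionally lim_{t→∞} ∫_τ^t γ(ξ) dξ = −∞, and either (i) the improper integral ∫_τ^∞ β(ξ)·ν(ξ) dξ converges, or (ii) γ(t) ≠ 0 for all sufficiently large t and lim_{t→∞} β(t)/γ(t) = 0, then lim_{t→∞} ‖u(t)‖ = 0. -/

import Mathlib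

/-!
Everything is driven by the integrating factor `ν`, which satisfies `ν' = -γν`.

On each delay interval `[a, a + τ]`, if `‖u‖ ≤ h` up to `a`, then `ν (‖u‖ - h)` has
nonpositive derivative wherever it is positive, so it stays `≤ 0`; stepping by `τ` gives
`‖u‖ ≤ h`. Since `(hν)' = ν (α h(t-τ)^p + β) ≥ 0`, we get `h(t-τ) ≤ σ(t) h(t)`. With the
growth condition on `α`, this makes `q ζ ν - h ν` nondecreasing while it is positive, and it is
positive at `τ`; hence `h < q ζ` on `[τ, ∞)`.

Finally `ν → ∞`, so `ζ → 0`: in case (i) the numerator of `ζ` converges; in case (ii) `γ` is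
eventually negative and `β ν ≤ ε (-γ ν) = ε ν'` eventually, a one-sided ∞/∞ L'Hôpital argument.
-/

open Real MeasureTheory Set Filter ComplexInnerProductSpace

/-- `ν(t) = exp(−∫₀ᵗ γ(ξ) dξ)`. -/
noncomputable def nu (γ : ℝ → ℝ) (t : ℝ) : ℝ := Real.exp (-∫ ξ in (0:ℝ)..t, γ ξ)

/-- `σ(t) = exp(−∫_{t−τ}^t γ(ξ) dξ)`. -/
noncomputable def sig (γ : ℝ → ℝ) (τ t : ℝ) : ℝ :=
  Real.exp (-∫ ξ in (t - τ)..t, γ ξ)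

open Topology

theorem pos_on_Icc_of_deriv_nonneg_where_pos {G G' : ℝ → ℝ} {a b : ℝ}
    (hc : ContinuousOn G (Icc a b)) (hd : ∀ x ∈ Ioo a b, HasDerivAt G (G' x) x)
    (hG' : ∀ x ∈ Ioo a b, 0 < G x → 0 ≤ G' x) (ha : 0 < G a) :
    ∀ x ∈ Icc a b, 0 < G x := by
  by_contra! hneg
  obtain ⟨t, ht, hGt⟩ := hneg
  set S := Icc a t ∩ G ⁻¹' Iic 0
  have hSc : IsClosed S :=
    (hc.mono (Icc_subset_Icc_right ht.2)).preimage_isClosed_of_isClosed isClosed_Icc isClosed_Iic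
  have hSbdd : BddBelow S := ⟨a, fun x hx => hx.1.1⟩
  have hcS : sInf S ∈ S := hSc.csInf_mem ⟨t, ⟨ht.1, le_rfl⟩, hGt⟩ hSbdd
  set c := sInf S
  have hbefore : ∀ x ∈ Ico a c, 0 < G x := fun x hx => by
    by_contra! hx0
    exact (csInf_le hSbdd ⟨⟨hx.1, hx.2.le.trans hcS.1.2⟩, hx0⟩).not_gt hx.2
  have hac : a < c := lt_of_le_of_ne hcS.1.1 fun hac => (hcS.2.trans_lt (hac ▸ ha)).false
  have hcb : c ≤ b := hcS.1.2.trans ht.2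
  have hmono : MonotoneOn G (Icc a c) := by
    refine monotoneOn_of_hasDerivWithinAt_nonneg (convex_Icc a c)
      (hc.mono (Icc_subset_Icc_right hcb)) (f' := G') (fun x hx => ?_) fun x hx => ?_
    all_goals rw [interior_Icc] at hx
    · exact (hd x (Ioo_subset_Ioo_right hcb hx)).hasDerivWithinAt
    · exact hG' x (Ioo_subset_Ioo_right hcb hx) (hbefore x ⟨hx.1.le, hx.2⟩)
  have hGc : G c ≤ 0 := hcS.2
  linarith [hmono (left_mem_Icc.2 hac.le) (right_mem_Icc.2 hac.le) hac.le]

theorem nonpos_on_Icc_of_deriv_nonpos_where_pos {F F' : ℝ → ℝ} {a b : ℝ}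
    (hc : ContinuousOn F (Icc a b)) (hd : ∀ x ∈ Ioo a b, HasDerivAt F (F' x) x)
    (hF' : ∀ x ∈ Ioo a b, 0 < F x → F' x ≤ 0) (ha : F a ≤ 0) :
    ∀ x ∈ Icc a b, F x ≤ 0 := by
  intro t ht
  by_contra! hFt
  have hrefl := pos_on_Icc_of_deriv_nonneg_where_pos (G := fun y => F (-y))
    (G' := fun y => -F' (-y)) (a := -t) (b := -a) ?_ ?_ ?_ (by simpa using hFt) (-a)
    ⟨neg_le_neg ht.1, le_rfl⟩
  · simp only [neg_neg] at hrefl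
    exact (ha.trans_lt hrefl).false
  · refine (hc.mono (Icc_subset_Icc_right ht.2)).comp continuousOn_neg fun y hy => ?_
    exact ⟨le_neg.1 hy.2, neg_le.1 hy.1⟩
  · intro y hy
    have hy' : -y ∈ Ioo a b := ⟨lt_neg.1 hy.2, (neg_lt.1 hy.1).trans_le ht.2⟩
    have := (hd (-y) hy').comp y (hasDerivAt_neg y)
    simpa [Function.comp_def] using this
  · intro y hy hpos
    exact neg_nonneg.2 (hF' (-y) ⟨lt_neg.1 hy.2, (neg_lt.1 hy.1).trans_le ht.2⟩ hpos)

theorem forall_ge_of_delay_step {τ : ℝ} (hτ : 0 < τ) {P : ℝ → Prop}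
    (h0 : ∀ t ∈ Icc (-τ) 0, P t)
    (hstep : ∀ a, 0 ≤ a → (∀ t ∈ Icc (-τ) a, P t) → ∀ t ∈ Icc a (a + τ), P t) :
    ∀ t, -τ ≤ t → P t := by
  have hn : ∀ n : ℕ, ∀ t ∈ Icc (-τ) (n * τ), P t := by
    intro n
    induction n with
    | zero => simpa using h0
    | succ n ih =>
      intro t ht
      rcases le_or_gt t (n * τ) with htn | htn
      · exact ih t ⟨ht.1, htn⟩
      · exact hstep _ (by positivity) ih t ⟨htn.le, by push_cast at ht; linarith [ht.2]⟩
  intro t ht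
  obtain ⟨n, hn'⟩ := exists_nat_ge (t / τ)
  exact hn n t ⟨ht, (div_le_iff₀ hτ).1 hn'⟩

theorem tendsto_div_zero_of_deriv_le_eps_mul {f g f' g' : ℝ → ℝ}
    (hf : ∀ t, HasDerivAt f (f' t) t) (hg : ∀ t, HasDerivAt g (g' t) t)
    (hg_top : Tendsto g atTop atTop) (hf0 : ∀ᶠ t in atTop, 0 ≤ f t)
    (hle : ∀ ε > 0, ∀ᶠ t in atTop, f' t ≤ ε * g' t) :
    Tendsto (fun t => f t / g t) atTop (𝓝 0) := by
  rw [tendsto_order]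
  refine ⟨fun a ha => ?_, fun ε hε => ?_⟩
  · filter_upwards [hf0, hg_top.eventually_gt_atTop 0] with t hft hgt
    exact ha.trans_le (div_nonneg hft hgt.le)
  obtain ⟨T, hT⟩ := eventually_atTop.1 (hle (ε / 2) (half_pos hε))
  have hmono : MonotoneOn (fun t => ε / 2 * g t - f t) (Ici T) := by
    refine monotoneOn_of_hasDerivWithinAt_nonneg (convex_Ici T)
      (fun t _ => (((hg t).const_mul _).sub (hf t)).continuousAt.continuousWithinAt)
      (fun t _ => (((hg t).const_mul _).sub (hf t)).hasDerivWithinAt) fun t ht => ?_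
    rw [interior_Ici] at ht
    linarith [hT t (le_of_lt ht)]
  have hC : Tendsto (fun t => (f T - ε / 2 * g T) / g t) atTop (𝓝 0) :=
    tendsto_const_nhds.div_atTop hg_top
  filter_upwards [eventually_ge_atTop T, hg_top.eventually_gt_atTop 0,
    hC.eventually (gt_mem_nhds (half_pos hε))] with t ht hgt hCt
  rw [div_lt_iff₀ hgt] at hCt ⊢
  linarith [hmono self_mem_Ici ht ht]

theorem eventually_neg_of_tendsto_integral_atBot {γ : ℝ → ℝ} {a : ℝ} (hγ : Continuous γ)
    (hne : ∀ᶠ t in atTop, γ t ≠ 0)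
    (hlim : Tendsto (fun t => ∫ ξ in a..t, γ ξ) atTop atBot) :
    ∀ᶠ t in atTop, γ t < 0 := by
  obtain ⟨T, hT⟩ := eventually_atTop.1 hne
  refine eventually_atTop.2 ⟨T, fun s hs => (hT s hs).lt_of_le ?_⟩
  by_contra! hγs
  have hpos : ∀ t, s ≤ t → 0 < γ t := by
    intro t hst
    by_contra! hγt
    obtain ⟨ξ, hξ, hξ0⟩ := intermediate_value_Icc' hst hγ.continuousOn ⟨hγt, hγs.le⟩
    exact hT ξ (hs.trans hξ.1) hξ0
  have hlow : ∀ t, s ≤ t → ∫ ξ in a..s, γ ξ ≤ ∫ ξ in a..t, γ ξ := fun t hst => by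
    rw [← intervalIntegral.integral_add_adjacent_intervals (hγ.intervalIntegrable a s)
      (hγ.intervalIntegrable s t)]
    exact le_add_of_nonneg_right
      (intervalIntegral.integral_nonneg hst fun x hx => (hpos x hx.1).le)
  obtain ⟨t, hst, ht⟩ := ((eventually_ge_atTop s).and
    (hlim.eventually (eventually_lt_atBot (∫ ξ in a..s, γ ξ)))).exists
  exact (ht.trans_le (hlow t hst)).false

theorem norm_mul_eq_re_inner_of_hasDerivAt {𝕜 E : Type*} [RCLike 𝕜] [NormedAddCommGroup E]
    [InnerProductSpace 𝕜 E] [NormedSpace ℝ E] [IsScalarTower ℝ 𝕜 E]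
    {u : ℝ → E} {u' : E} {D x : ℝ}
    (hu : HasDerivAt u u' x) (hn : HasDerivAt (fun s => ‖u s‖) D x) :
    ‖u x‖ * D = RCLike.re (inner 𝕜 (u x) u') := by
  have hsq : HasDerivAt (fun s => ‖u s‖ ^ 2)
      (RCLike.re (inner 𝕜 (u x) u' + inner 𝕜 u' (u x))) x := by
    have := (RCLike.reCLM (K := 𝕜)).hasFDerivAt.comp_hasDerivAt x (hu.inner 𝕜 hu)
    simpa [Function.comp_def, inner_self_eq_norm_sq] using this
  have hsq' : HasDerivAt (fun s => ‖u s‖ ^ 2) (2 * ‖u x‖ * D) x := by simpa using hn.fun_pow 2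
  have := hsq.unique hsq'
  rw [map_add, inner_re_symm u' (u x)] at this
  linarith

theorem nu_pos (γ : ℝ → ℝ) (t : ℝ) : 0 < nu γ t := Real.exp_pos _

theorem sig_pos (γ : ℝ → ℝ) (τ t : ℝ) : 0 < sig γ τ t := Real.exp_pos _

theorem hasDerivAt_nu {γ : ℝ → ℝ} (hγ : Continuous γ) (t : ℝ) :
    HasDerivAt (nu γ) (-γ t * nu γ t) t := by
  have hint : HasDerivAt (fun s => -∫ ξ in (0:ℝ)..s, γ ξ) (-γ t) t :=
    (hγ.integral_hasStrictDerivAt 0 t).hasDerivAt.neg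
  have := hint.exp
  rwa [mul_comm] at this

theorem continuous_nu {γ : ℝ → ℝ} (hγ : Continuous γ) : Continuous (nu γ) :=
  continuous_iff_continuousAt.2 fun t => (hasDerivAt_nu hγ t).continuousAt

theorem nu_eq_nu_sub_mul_sig {γ : ℝ → ℝ} (hγ : Continuous γ) (τ t : ℝ) :
    nu γ t = nu γ (t - τ) * sig γ τ t := by
  rw [nu, nu, sig, ← Real.exp_add, ← neg_add, intervalIntegral.integral_add_adjacent_intervals
    (hγ.intervalIntegrable _ _) (hγ.intervalIntegrable _ _)]

theorem tendsto_nu_atTop {γ : ℝ → ℝ} {a : ℝ} (hγ : Continuous γ)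
    (hlim : Tendsto (fun t => ∫ ξ in a..t, γ ξ) atTop atBot) : Tendsto (nu γ) atTop atTop := by
  have hsplit : ∀ t, nu γ t = Real.exp (-(∫ ξ in (0:ℝ)..a, γ ξ) + -∫ ξ in a..t, γ ξ) :=
    fun t => by rw [nu, ← neg_add, intervalIntegral.integral_add_adjacent_intervals
      (hγ.intervalIntegrable _ _) (hγ.intervalIntegrable _ _)]
  rw [funext hsplit]
  exact Real.tendsto_exp_atTop.comp
    (tendsto_atTop_add_const_left _ _ (tendsto_neg_atBot_atTop.comp hlim))

theorem le_of_delay_supersolution {τ p : ℝ} (hτ : 0 < τ) (hp : 0 ≤ p)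
    {γ α β y y' h h' : ℝ → ℝ} (hγ : Continuous γ) (hα : ∀ t, 0 ≤ α t)
    (hy0 : ∀ t, -τ ≤ t → 0 ≤ y t) (hyc : ContinuousOn y (Ici (-τ)))
    (hyd : ∀ x, 0 < x → HasDerivAt y (y' x) x)
    (hy' : ∀ x, 0 < x → 0 < y x → y' x ≤ γ x * y x + α x * y (x - τ) ^ p + β x)
    (hh0 : ∀ t, 0 ≤ t → 0 ≤ h t) (hhc : ContinuousOn h (Ici (-τ)))
    (hhd : ∀ x, 0 < x → HasDerivAt h (h' x) x)
    (hh' : ∀ x, 0 < x → γ x * h x + α x * h (x - τ) ^ p + β x ≤ h' x)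
    (hinit : ∀ t ∈ Icc (-τ) 0, y t ≤ h t) :
    ∀ t, -τ ≤ t → y t ≤ h t := by
  refine forall_ge_of_delay_step hτ hinit fun a ha hprev t ht => ?_
  have hsub : Icc a (a + τ) ⊆ Ici (-τ) := fun s hs => (by linarith : -τ ≤ a).trans hs.1
  have hF := nonpos_on_Icc_of_deriv_nonpos_where_pos (F := fun s => (y s - h s) * nu γ s)
    (F' := fun x => (y' x - h' x) * nu γ x + (y x - h x) * (-γ x * nu γ x))
    (((hyc.sub hhc).mono hsub).mul (continuous_nu hγ).continuousOn)
    (fun x hx => ((hyd x (ha.trans_lt hx.1)).sub (hhd x (ha.trans_lt hx.1))).mul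
      (hasDerivAt_nu hγ x))
    (fun x hx hFx => ?_)
    (mul_nonpos_of_nonpos_of_nonneg (sub_nonpos.2 (hprev a ⟨by linarith, le_rfl⟩))
      (nu_pos γ a).le) t ht
  · exact sub_nonpos.1 (nonpos_of_mul_nonpos_left hF (nu_pos γ t))
  have hx0 : 0 < x := ha.trans_lt hx.1
  have hyh : h x < y x := sub_pos.1 (pos_of_mul_pos_left hFx (nu_pos γ x).le)
  have hdelay : α x * y (x - τ) ^ p ≤ α x * h (x - τ) ^ p :=
    mul_le_mul_of_nonneg_left (Real.rpow_le_rpow (hy0 _ (by linarith))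
      (hprev _ ⟨by linarith, by linarith [hx.2]⟩) hp) (hα x)
  have hgap : y' x - h' x - γ x * (y x - h x) ≤ 0 := by
    linarith [hy' x hx0 ((hh0 x hx0.le).trans_lt hyh), hh' x hx0]
  calc (y' x - h' x) * nu γ x + (y x - h x) * (-γ x * nu γ x)
      = (y' x - h' x - γ x * (y x - h x)) * nu γ x := by ring
    _ ≤ 0 := mul_nonpos_of_nonpos_of_nonneg hgap (nu_pos γ x).le

theorem monotoneOn_mul_nu {γ h h' : ℝ → ℝ} {a : ℝ} (hγ : Continuous γ)
    (hc : ContinuousOn h (Ici a)) (hd : ∀ x, a < x → HasDerivAt h (h' x) x)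
    (hle : ∀ x, a < x → γ x * h x ≤ h' x) :
    MonotoneOn (fun t => h t * nu γ t) (Ici a) := by
  refine monotoneOn_of_hasDerivWithinAt_nonneg (convex_Ici a)
    (hc.mul (continuous_nu hγ).continuousOn)
    (f' := fun x => h' x * nu γ x + h x * (-γ x * nu γ x)) (fun x hx => ?_) fun x hx => ?_
  all_goals rw [interior_Ici] at hx
  · exact ((hd x hx).mul (hasDerivAt_nu hγ x)).hasDerivWithinAt
  · have := mul_nonneg (sub_nonneg.2 (hle x hx)) (nu_pos γ x).le
    linarith

theorem le_mul_sig_of_monotoneOn {γ h : ℝ → ℝ} {τ t : ℝ} (hγ : Continuous γ) (hτ : 0 ≤ τ)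
    (hmono : MonotoneOn (fun t => h t * nu γ t) (Ici 0)) (ht : τ ≤ t) :
    h (t - τ) ≤ h t * sig γ τ t := by
  have : h (t - τ) * nu γ (t - τ) ≤ h t * nu γ t :=
    hmono (sub_nonneg.2 ht) (hτ.trans ht : (0:ℝ) ≤ t) (sub_le_self t hτ)
  rw [nu_eq_nu_sub_mul_sig hγ τ t] at this
  exact le_of_mul_le_mul_right (this.trans_eq (by ring)) (nu_pos γ (t - τ))

noncomputable def zetaNum (γ β h : ℝ → ℝ) (τ t : ℝ) : ℝ :=
  h τ * nu γ τ + ∫ ξ in τ..t, β ξ * nu γ ξ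

noncomputable def zeta (γ β h : ℝ → ℝ) (τ t : ℝ) : ℝ := zetaNum γ β h τ t / nu γ t

section zeta

variable {γ β h : ℝ → ℝ} {τ : ℝ}

theorem zetaNum_self : zetaNum γ β h τ τ = h τ * nu γ τ := by
  simp [zetaNum]

theorem hasDerivAt_zetaNum (hγ : Continuous γ) (hβ : Continuous β) (t : ℝ) :
    HasDerivAt (zetaNum γ β h τ) (β t * nu γ t) t :=
  ((hβ.mul (continuous_nu hγ)).integral_hasStrictDerivAt τ t).hasDerivAt.const_add _

theorem continuous_zetaNum (hγ : Continuous γ) (hβ : Continuous β) :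
    Continuous (zetaNum γ β h τ) :=
  continuous_iff_continuousAt.2 fun t => (hasDerivAt_zetaNum hγ hβ t).continuousAt

theorem zetaNum_nonneg (hβ : ∀ t, 0 ≤ β t) (hhτ : 0 ≤ h τ) {t : ℝ} (ht : τ ≤ t) :
    0 ≤ zetaNum γ β h τ t :=
  add_nonneg (mul_nonneg hhτ (nu_pos γ τ).le)
    (intervalIntegral.integral_nonneg ht fun ξ _ => mul_nonneg (hβ ξ) (nu_pos γ ξ).le)

theorem lt_mul_zeta_iff {q x t : ℝ} :
    x < q * zeta γ β h τ t ↔ x * nu γ t < q * zetaNum γ β h τ t := by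
  rw [zeta, ← mul_div_assoc, lt_div_iff₀ (nu_pos γ t)]

end zeta

theorem lt_mul_zeta {τ p q : ℝ} (hτ : 0 ≤ τ) (hp : 0 ≤ p) (hq : 1 < q)
    {γ α β h h' : ℝ → ℝ} (hγ : Continuous γ) (hβ : Continuous β) (hα : ∀ t, 0 ≤ α t)
    (hh0 : ∀ t, 0 ≤ t → 0 ≤ h t) (hhτ : 0 < h τ) (hhc : ContinuousOn h (Ici τ))
    (hhd : ∀ x, τ < x → HasDerivAt h (h' x) x)
    (hh' : ∀ x, τ < x → h' x ≤ γ x * h x + α x * h (x - τ) ^ p + β x)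
    (hsig : ∀ t, τ ≤ t → h (t - τ) ≤ h t * sig γ τ t)
    (hcond : ∀ t, τ ≤ t → α t * sig γ τ t ^ p * (q * zeta γ β h τ t) ^ p ≤ (q - 1) * β t) :
    ∀ t, τ ≤ t → h t < q * zeta γ β h τ t := by
  intro t ht
  refine lt_mul_zeta_iff.2 (sub_pos.1 (pos_on_Icc_of_deriv_nonneg_where_pos
    (G := fun s => q * zetaNum γ β h τ s - h s * nu γ s)
    (G' := fun x => q * (β x * nu γ x) - (h' x * nu γ x + h x * (-γ x * nu γ x)))
    (((continuous_const.mul (continuous_zetaNum hγ hβ)).continuousOn.sub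
      ((hhc.mono Icc_subset_Ici_self).mul (continuous_nu hγ).continuousOn)))
    (fun x hx => ((hasDerivAt_zetaNum hγ hβ x).const_mul q).sub
      ((hhd x hx.1).mul (hasDerivAt_nu hγ x)))
    (fun x hx hGx => ?_) ?_ t ⟨ht, le_rfl⟩))
  · have hhx : h x < q * zeta γ β h τ x := lt_mul_zeta_iff.2 (sub_pos.1 hGx)
    have hqζ : 0 ≤ q * zeta γ β h τ x := (hh0 x (hτ.trans hx.1.le)).trans hhx.le
    have hdelay : h (x - τ) ≤ sig γ τ x * (q * zeta γ β h τ x) :=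
      (hsig x hx.1.le).trans <| by
        rw [mul_comm (h x)]; exact mul_le_mul_of_nonneg_left hhx.le (sig_pos γ τ x).le
    have hpow : α x * h (x - τ) ^ p ≤ (q - 1) * β x := by
      refine (mul_le_mul_of_nonneg_left ?_ (hα x)).trans
        ((mul_assoc _ _ _).symm.trans_le (hcond x hx.1.le))
      rw [← Real.mul_rpow (sig_pos γ τ x).le hqζ]
      exact Real.rpow_le_rpow (hh0 _ (by linarith [hx.1])) hdelay hp
    calc 0 ≤ ((q - 1) * β x - α x * h (x - τ) ^ p) * nu γ x
          + (γ x * h x + α x * h (x - τ) ^ p + β x - h' x) * nu γ x :=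
          add_nonneg (mul_nonneg (sub_nonneg.2 hpow) (nu_pos γ x).le)
            (mul_nonneg (sub_nonneg.2 (hh' x hx.1)) (nu_pos γ x).le)
      _ = q * (β x * nu γ x) - (h' x * nu γ x + h x * (-γ x * nu γ x)) := by ring
  · show 0 < q * zetaNum γ β h τ τ - h τ * nu γ τ
    rw [zetaNum_self]
    nlinarith [mul_pos hhτ (nu_pos γ τ)]

theorem tendsto_zeta_atTop {γ β h : ℝ → ℝ} {τ : ℝ} (hγ : Continuous γ) (hβc : Continuous β)
    (hβ : ∀ t, 0 ≤ β t) (hhτ : 0 ≤ h τ)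
    (hγlim : Tendsto (fun t => ∫ ξ in τ..t, γ ξ) atTop atBot)
    (halt : IntegrableOn (fun ξ => β ξ * nu γ ξ) (Ici τ) ∨
      ((∀ᶠ t in atTop, γ t ≠ 0) ∧ Tendsto (fun t => β t / γ t) atTop (𝓝 0))) :
    Tendsto (zeta γ β h τ) atTop (𝓝 0) := by
  have hν := tendsto_nu_atTop hγ hγlim
  rcases halt with hint | ⟨hne, hlim⟩
  · exact ((intervalIntegral_tendsto_integral_Ioi τ (hint.mono_set Ioi_subset_Ici_self)
      tendsto_id).const_add _).div_atTop hν
  refine tendsto_div_zero_of_deriv_le_eps_mul (hasDerivAt_zetaNum hγ hβc) (hasDerivAt_nu hγ) hν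
    ((eventually_ge_atTop τ).mono fun t ht => zetaNum_nonneg hβ hhτ ht) fun ε hε => ?_
  filter_upwards [eventually_neg_of_tendsto_integral_atBot hγ hne hγlim,
    hlim.eventually (lt_mem_nhds (neg_neg_of_pos hε))] with t hγt hβγ
  rw [lt_div_iff_of_neg hγt] at hβγ
  nlinarith [nu_pos γ t]

theorem stmt_14_general
    {H : Type*} [NormedAddCommGroup H] [InnerProductSpace ℂ H]
    (τ p : ℝ) (hτ : 0 < τ) (hp : 1 < p)
    (γ α β : ℝ → ℝ)
    (hγc : Continuous γ) (hβc : Continuous β)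
    (hα : ∀ t, 0 ≤ α t) (hβ : ∀ t, 0 ≤ β t)
    (u : ℝ → H) (u' : ℝ → H)
    (huc : ContinuousOn u (Ici (-τ)))
    (hud : ∀ t, 0 ≤ t → HasDerivWithinAt u (u' t) (Ici (0:ℝ)) t)
    (hnd : ∀ t, 0 ≤ t → DifferentiableWithinAt ℝ (fun s => ‖u s‖) (Ici (0:ℝ)) t)
    (huineq : ∀ t, 0 ≤ t → (⟪u t, u' t⟫).re ≤
      γ t * ‖u t‖ ^ 2 + α t * ‖u t‖ * ‖u (t - τ)‖ ^ p + β t * ‖u t‖)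
    (h h' : ℝ → ℝ)
    (hh0 : ∀ t, -τ ≤ t → 0 ≤ h t)
    (hhc : ContinuousOn h (Ici (-τ)))
    (hhd : ∀ t, 0 ≤ t → HasDerivWithinAt h (h' t) (Ici (0:ℝ)) t)
    (hheq : ∀ t, 0 ≤ t → h' t = γ t * h t + α t * h (t - τ) ^ p + β t)
    (hinit : ∀ t, -τ ≤ t → t ≤ 0 → h t = ‖u t‖)
    (hhτ : 0 < h τ)
    (q : ℝ) (hq : 1 < q)
    (ζ : ℝ → ℝ)
    (hζ : ∀ t, τ ≤ t →
      ζ t = (h τ * nu γ τ + ∫ ξ in τ..t, β ξ * nu γ ξ) / nu γ t)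
    (hcond : ∀ t, τ ≤ t → α t * sig γ τ t ^ p * (q * ζ t) ^ p ≤ (q - 1) * β t)
    (hγlim : Tendsto (fun t => ∫ ξ in τ..t, γ ξ) atTop atBot)
    (halt : IntegrableOn (fun ξ => β ξ * nu γ ξ) (Ici τ) ∨
      ((∀ᶠ t in atTop, γ t ≠ 0) ∧ Tendsto (fun t => β t / γ t) atTop (nhds 0))) :
    Tendsto (fun t => ‖u t‖) atTop (nhds 0) := by
  have hp0 : 0 ≤ p := by linarith
  have hh0' : ∀ t, 0 ≤ t → 0 ≤ h t := fun t ht => hh0 t (by linarith)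
  have hhd' : ∀ x, 0 < x → HasDerivAt h (h' x) x := fun x hx =>
    (hhd x hx.le).hasDerivAt (Ici_mem_nhds hx)
  have hnd' : ∀ x, 0 < x → HasDerivAt (fun s => ‖u s‖) (deriv (fun s => ‖u s‖) x) x :=
    fun x hx => ((hnd x hx.le).differentiableAt (Ici_mem_nhds hx)).hasDerivAt
  have hnorm : ∀ t, -τ ≤ t → ‖u t‖ ≤ h t := by
    refine le_of_delay_supersolution hτ hp0 hγc hα (fun t _ => norm_nonneg _) huc.norm hnd'
      (fun x hx hux => le_of_mul_le_mul_left ?_ hux) hh0' hhc hhd' (fun x hx => (hheq x hx.le).ge)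
      fun t ht => (hinit t ht.1 ht.2).ge
    rw [norm_mul_eq_re_inner_of_hasDerivAt (𝕜 := ℂ)
      ((hud x hx.le).hasDerivAt (Ici_mem_nhds hx)) (hnd' x hx)]
    exact (huineq x hx.le).trans_eq (by ring)
  have hmono : MonotoneOn (fun t => h t * nu γ t) (Ici 0) :=
    monotoneOn_mul_nu hγc (hhc.mono (Ici_subset_Ici.2 (by linarith))) hhd' fun x hx => by
      rw [hheq x hx.le]
      linarith [mul_nonneg (hα x) (Real.rpow_nonneg (hh0 (x - τ) (by linarith)) p), hβ x]
  have hsig : ∀ t, τ ≤ t → h (t - τ) ≤ h t * sig γ τ t := fun t ht =>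
    le_mul_sig_of_monotoneOn hγc hτ.le hmono ht
  have hbound : ∀ t, τ ≤ t → h t < q * zeta γ β h τ t :=
    lt_mul_zeta hτ.le hp0 hq hγc hβc hα hh0' hhτ (hhc.mono (Ici_subset_Ici.2 (by linarith)))
      (fun x hx => hhd' x (hτ.trans hx)) (fun x hx => (hheq x (by linarith)).le) hsig
      fun t ht => by rw [zeta, zetaNum, ← hζ t ht]; exact hcond t ht
  have hdecay := (tendsto_zeta_atTop hγc hβc hβ hhτ.le hγlim halt).const_mul q
  rw [mul_zero] at hdecay
  refine squeeze_zero' (Eventually.of_forall fun t => norm_nonneg _) ?_ hdecay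
  filter_upwards [eventually_ge_atTop τ] with t ht
  exact (hnorm t (by linarith)).trans (hbound t ht).le

/-- Theorem 2.7 (Theorem 2), decay: if moreover `∫_τ^t γ → −∞` and either `∫_τ^∞ β ν < ∞` or `β/γ → 0`, then `‖u(t)‖ → 0` as `t → ∞`. -/
theorem stmt_14
    {H : Type*} [NormedAddCommGroup H] [InnerProductSpace ℂ H]
    (τ p : ℝ) (hτ : 0 < τ) (hp : 1 < p)
    (γ α β : ℝ → ℝ)
    (hγc : Continuous γ) (hαc : Continuous α) (hβc : Continuous β)
    (hα : ∀ t, 0 ≤ α t) (hβ : ∀ t, 0 ≤ β t)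
    (u : ℝ → H) (u' : ℝ → H)
    (huc : ContinuousOn u (Ici (-τ)))
    (hud : ∀ t, 0 ≤ t → HasDerivWithinAt u (u' t) (Ici (0:ℝ)) t)
    (hnd : ∀ t, 0 ≤ t → DifferentiableWithinAt ℝ (fun s => ‖u s‖) (Ici (0:ℝ)) t)
    (huineq : ∀ t, 0 ≤ t → (⟪u t, u' t⟫).re ≤
      γ t * ‖u t‖ ^ 2 + α t * ‖u t‖ * ‖u (t - τ)‖ ^ p + β t * ‖u t‖)
    (h h' : ℝ → ℝ)
    (hh0 : ∀ t, -τ ≤ t → 0 ≤ h t)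
    (hhc : ContinuousOn h (Ici (-τ)))
    (hhd : ∀ t, 0 ≤ t → HasDerivWithinAt h (h' t) (Ici (0:ℝ)) t)
    (hheq : ∀ t, 0 ≤ t → h' t = γ t * h t + α t * h (t - τ) ^ p + β t)
    (hinit : ∀ t, -τ ≤ t → t ≤ 0 → h t = ‖u t‖)
    (hhτ : 0 < h τ)
    (q : ℝ) (hq : 1 < q)
    (ζ : ℝ → ℝ)
    (hζ : ∀ t, τ ≤ t →
      ζ t = (h τ * nu γ τ + ∫ ξ in τ..t, β ξ * nu γ ξ) / nu γ t)
    (hcond : ∀ t, τ ≤ t → α t * sig γ τ t ^ p * (q * ζ t) ^ p ≤ (q - 1) * β t)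
    (hγlim : Tendsto (fun t => ∫ ξ in τ..t, γ ξ) atTop atBot)
    (halt : IntegrableOn (fun ξ => β ξ * nu γ ξ) (Ici τ) ∨
      ((∀ᶠ t in atTop, γ t ≠ 0) ∧ Tendsto (fun t => β t / γ t) atTop (nhds 0))) :
    Tendsto (fun t => ‖u t‖) atTop (nhds 0) :=
  stmt_14_general τ p hτ hp γ α β hγc hβc hα hβ u u' huc hud hnd huineq h h' hh0 hhc hhd hheq hinit
    hhτ q hq ζ hζ hcond hγlim halt
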